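/- Let T(·|z) be a Markov kernel, Z a safe set with measurable partition Z_1,...,Z_K, and B the piecewise constant function equal to b_i ∈ [0,1] on Z_i and 1 outside Z. If for all i and all z ∈ Z_i one has ∑_j b_j · T(Z_j | z) + T(Zᶜ | z) ≤ b_i + β with β ≥ 0, then the process Y_k = B(z_{min(k,τ)}) + (N−min(k,τ))·(−β), where τ is the first exit time from Z, satisfies E[Y_{k+1} | F_k] ≤ Y_k + β for the stopped chain; in particular E[B(z_{N∧τ})] ≤ B(z_0) + βN for any initial z_0 ∈ Z. -/

import Mathlib

open MeasureTheory Classical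

/-- Expected value of the barrier for the chain stopped at the first exit time from `Z`:
`stoppedExpB T Z B N z = E[B(z_{N ∧ τ}) | z_0 = z]` where `τ = inf {k : z_k ∉ Z}`. -/
noncomputable def stoppedExpB {S : Type*} [MeasurableSpace S] (T : S → Measure S)
    (Z : Set S) (B : S → ENNReal) : ℕ → S → ENNReal
  | 0, z => B z
  | N + 1, z => if z ∈ Z then ∫⁻ y, stoppedExpB T Z B N y ∂(T z) else B z

theorem pwc_sbf_stopped_supermartingale {S : Type*} [MeasurableSpace S]
    (T : S → Measure S) (hT : ∀ z, IsProbabilityMeasure (T z))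
    (K : ℕ) (Zpart : Fin K → Set S) (Z : Set S)
    (hZ : Z = ⋃ i, Zpart i)
    (hdisj : Pairwise (Function.onFun Disjoint Zpart))
    (hmeas : ∀ i, MeasurableSet (Zpart i))
    (b : Fin K → ENNReal) (hb : ∀ i, b i ≤ 1)
    (B : S → ENNReal)
    (hBin : ∀ i, ∀ z ∈ Zpart i, B z = b i)
    (hBout : ∀ z ∉ Z, B z = 1)
    (β : ENNReal)
    (hdrift : ∀ i, ∀ z ∈ Zpart i,
      ∑ j, b j * T z (Zpart j) + T z Zᶜ ≤ b i + β)
    (N : ℕ) :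
    (∀ k : ℕ, ∀ z : S,
      stoppedExpB T Z B (k + 1) z ≤ stoppedExpB T Z B k z + β) ∧
    (∀ z0 ∈ Z, stoppedExpB T Z B N z0 ≤ B z0 + β * N) := by
  have hZmeas : MeasurableSet Z := by
    rw [hZ]; exact MeasurableSet.iUnion fun i => hmeas i
  -- key one-step estimate
  have key : ∀ z ∈ Z, (∫⁻ y, B y ∂(T z)) ≤ B z + β := by
    intro z hz
    obtain ⟨i, hzi⟩ : ∃ i, z ∈ Zpart i := by
      rw [hZ] at hz; exact Set.mem_iUnion.mp hz
    set g : S → ENNReal := fun y =>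
      (∑ j, (Zpart j).indicator (fun _ => b j) y) + Zᶜ.indicator (fun _ => 1) y with hg
    have hBg : ∀ y, B y ≤ g y := by
      intro y
      by_cases hy : y ∈ Z
      · obtain ⟨j, hyj⟩ : ∃ j, y ∈ Zpart j := by
          rw [hZ] at hy; exact Set.mem_iUnion.mp hy
        calc B y = b j := hBin j y hyj
          _ ≤ ∑ j', (Zpart j').indicator (fun _ => b j') y := by
              have : (Zpart j).indicator (fun _ => b j) y = b j := by
                simp [Set.indicator_of_mem hyj]
              rw [← this]
              exact Finset.single_le_sum (f := fun j' => (Zpart j').indicator (fun _ => b j') y) (fun _ _ => zero_le) (Finset.mem_univ j)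
          _ ≤ g y := le_self_add
      · calc B y = 1 := hBout y hy
          _ = Zᶜ.indicator (fun _ => (1:ENNReal)) y := by
              simp [Set.indicator_of_mem (Set.mem_compl hy)]
          _ ≤ g y := le_add_self
    have hgint : (∫⁻ y, g y ∂(T z)) = ∑ j, b j * T z (Zpart j) + T z Zᶜ := by
      rw [hg]
      rw [lintegral_add_right _ ((measurable_const).indicator hZmeas.compl)]
      rw [lintegral_finset_sum _ (fun j _ => (measurable_const).indicator (hmeas j))]
      congr 1
      · exact Finset.sum_congr rfl fun j _ => by
          rw [lintegral_indicator_const (hmeas j)]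
      · rw [lintegral_indicator_const hZmeas.compl, one_mul]
    calc (∫⁻ y, B y ∂(T z)) ≤ ∫⁻ y, g y ∂(T z) := lintegral_mono hBg
      _ = ∑ j, b j * T z (Zpart j) + T z Zᶜ := hgint
      _ ≤ b i + β := hdrift i z hzi
      _ = B z + β := by rw [hBin i z hzi]
    -- end key
  have part1 : ∀ k : ℕ, ∀ z : S,
      stoppedExpB T Z B (k + 1) z ≤ stoppedExpB T Z B k z + β := by
    intro k
    induction k with
    | zero =>
      intro z
      by_cases hz : z ∈ Z
      · simpa [stoppedExpB, hz] using key z hz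
      · simp [stoppedExpB, hz]
    | succ k ih =>
      intro z
      by_cases hz : z ∈ Z
      · have : stoppedExpB T Z B (k + 1 + 1) z = ∫⁻ y, stoppedExpB T Z B (k+1) y ∂(T z) := by
          simp [stoppedExpB, hz]
        rw [this]
        have h2 : stoppedExpB T Z B (k + 1) z = ∫⁻ y, stoppedExpB T Z B k y ∂(T z) := by
          simp [stoppedExpB, hz]
        rw [h2]
        calc (∫⁻ y, stoppedExpB T Z B (k+1) y ∂(T z))
            ≤ ∫⁻ y, (stoppedExpB T Z B k y + β) ∂(T z) := lintegral_mono fun y => ih y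
          _ = (∫⁻ y, stoppedExpB T Z B k y ∂(T z)) + β := by
              rw [lintegral_add_right _ measurable_const, lintegral_const,
                measure_univ, mul_one]
          _ ≤ _ := le_rfl
      · simp [stoppedExpB, hz]
  refine ⟨part1, ?_⟩
  intro z0 _
  induction N with
  | zero => simp [stoppedExpB]
  | succ n ih =>
    calc stoppedExpB T Z B (n + 1) z0 ≤ stoppedExpB T Z B n z0 + β := part1 n z0
      _ ≤ B z0 + β * n + β := add_le_add_left ih β
      _ = B z0 + β * ((n + 1 : ℕ) : ENNReal) := by push_cast; rw [mul_add, mul_one, add_assoc]
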